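/- Let 0 < ε ≤ 1/2 and let x be a vertex with μ(x) ≥ 1/n, where n is the number of vertices. Let t be an integer with t ≥ n²·W/ε, where W is the maximum edge weight, and suppose δ̂_t(x) is a real number with δ_t(x) ≤ δ̂_t(x) ≤ (1+ε)·δ_t(x). Then the value μ̂(x) := δ̂_t(x)/((1−ε)·t) satisfies μ(x) ≤ μ̂(x) ≤ (1 + 7ε)·μ(x). -/

import Mathlib

open scoped ENNReal

/-- A walk of length `t` in the graph: `t+1` vertices with consecutive ones joined by edges
(edges and vertices may repeat). -/
def IsWalk {n : ℕ} (E : Fin n → Fin n → Prop) {t : ℕ} (p : Fin (t + 1) → Fin n) : Prop :=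
  ∀ i : Fin t, E (p i.castSucc) (p i.succ)

/-- The weight of a walk: the sum of its edge weights. -/
def walkWeight {n : ℕ} (w : Fin n → Fin n → ℕ) {t : ℕ} (p : Fin (t + 1) → Fin n) : ℕ :=
  ∑ i : Fin t, w (p i.castSucc) (p i.succ)
/-- `y` is reachable from `x` (by a path of length ≥ 0). -/
def Reachable {n : ℕ} (E : Fin n → Fin n → Prop) (x y : Fin n) : Prop :=
  ∃ (t : ℕ) (p : Fin (t + 1) → Fin n), IsWalk E p ∧ p 0 = x ∧ p (Fin.last t) = y

/-- The set of mean weights of cycles reachable from `x`. -/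
def cycleMeans {n : ℕ} (E : Fin n → Fin n → Prop) (w : Fin n → Fin n → ℕ)
    (x : Fin n) : Set ℝ :=
  {q | ∃ (t : ℕ) (p : Fin (t + 1) → Fin n), 0 < t ∧ IsWalk E p ∧
    p (Fin.last t) = p 0 ∧ Reachable E x (p 0) ∧ q = (walkWeight w p : ℝ) / t}

/-- `mcm E w x` is `μ(x)`, the minimum mean weight over all cycles reachable from `x`. -/
noncomputable def mcm {n : ℕ} (E : Fin n → Fin n → Prop) (w : Fin n → Fin n → ℕ)
    (x : Fin n) : ℝ :=
  sInf (cycleMeans E w x)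
/-- `deltaNat E w t x` is `δ_t(x)`, the minimum weight of all paths of length exactly `t`
starting at `x`. -/
noncomputable def deltaNat {n : ℕ} (E : Fin n → Fin n → Prop) (w : Fin n → Fin n → ℕ)
    (t : ℕ) (x : Fin n) : ℕ :=
  sInf {c : ℕ | ∃ p : Fin (t + 1) → Fin n, IsWalk E p ∧ p 0 = x ∧ c = walkWeight w p}

/-!
Every walk of length `t` from `x` splits into cycles reachable from `x`, each of mean at least
`μ(x)`, and a simple path with fewer than `n` edges, so `μ(x) * (t - n) ≤ δ_t(x)`. Conversely,
`μ(x)` is the mean of a simple cycle (splitting a cycle at a repeated vertex gives two shorter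
cycles whose lengths and weights add up to the original ones), and a shortest path from `x` to that cycle
followed by turns around it shows `δ_t(x) ≤ μ(x) * t + n * W`, because path and cycle together
have at most `n` edges. Since `μ(x) ≥ 1/n` and `t ≥ n²W/ε`, the error `n * W` is at most
`ε * μ(x) * t`, and `(1 + ε)² ≤ (1 + 7ε)(1 - ε)` for `ε ≤ 1/2`.
-/

open Finset Function Relation

section

variable {n : ℕ} {E : Fin n → Fin n → Prop} {w : Fin n → Fin n → ℕ}

/-- Walks indexed by `ℕ`, of which only the first `t + 1` values matter; unlike `IsWalk` they can
be cut and concatenated without dependent types. -/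
def IsNatWalk (E : Fin n → Fin n → Prop) (f : ℕ → Fin n) (t : ℕ) : Prop :=
  ∀ i < t, E (f i) (f (i + 1))

def natWalkWeight (w : Fin n → Fin n → ℕ) (f : ℕ → Fin n) (t : ℕ) : ℕ :=
  ∑ i ∈ range t, w (f i) (f (i + 1))

def natWalkAppend (g : ℕ → Fin n) (p : ℕ) (φ : ℕ → Fin n) : ℕ → Fin n :=
  fun k => if k < p then g k else φ (k - p)

def cutOut (f : ℕ → Fin n) (i d : ℕ) : ℕ → Fin n :=
  natWalkAppend f i fun k => f (i + d + k)

structure IsReachableCycle (E : Fin n → Fin n → Prop) (x : Fin n) (f : ℕ → Fin n)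
    (c : ℕ) : Prop where
  pos : 0 < c
  walk : IsNatWalk E f c
  closed : f c = f 0
  reachable : ReflTransGen E x (f 0)

section Walks

variable {f g φ : ℕ → Fin n} {a b i d k p r t L : ℕ}

theorem IsNatWalk.mono (hf : IsNatWalk E f t) (h : a ≤ t) : IsNatWalk E f a :=
  fun i hi => hf i (by omega)

theorem IsNatWalk.shift (hf : IsNatWalk E f (a + b)) : IsNatWalk E (fun k => f (a + k)) b :=
  fun i hi => by simpa only [Nat.add_assoc] using hf (a + i) (by omega)

theorem IsNatWalk.reflTransGen (hf : IsNatWalk E f t) (h : a ≤ t) :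
    ReflTransGen E (f 0) (f a) := by
  induction a with
  | zero => exact .refl
  | succ a ih => exact (ih (by omega)).tail (hf a (by omega))

theorem natWalkWeight_add :
    natWalkWeight w f (a + b) = natWalkWeight w f a + natWalkWeight w (fun k => f (a + k)) b := by
  simp only [natWalkWeight, sum_range_add, Nat.add_assoc]

theorem natWalkWeight_mono (h : a ≤ b) : natWalkWeight w f a ≤ natWalkWeight w f b :=
  sum_le_sum_of_subset (range_subset_range.2 h)

theorem natWalkWeight_le {W : ℕ} (hW : ∀ u v, E u v → w u v ≤ W) (hf : IsNatWalk E f t) :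
    natWalkWeight w f t ≤ t * W := by
  simpa [natWalkWeight] using sum_le_card_nsmul _ _ W fun i hi => hW _ _ (hf i (mem_range.1 hi))

theorem natWalkAppend_of_le (h : g p = φ 0) (hk : k ≤ p) : natWalkAppend g p φ k = g k := by
  unfold natWalkAppend
  split_ifs with hkp
  · rfl
  · obtain rfl : k = p := by omega
    simp [h]

theorem natWalkAppend_add : natWalkAppend g p φ (p + k) = φ k := by
  simp [natWalkAppend]

theorem IsNatWalk.append (hg : IsNatWalk E g p) (hφ : IsNatWalk E φ L) (h : g p = φ 0) :
    IsNatWalk E (natWalkAppend g p φ) (p + L) := by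
  intro i hi
  rcases Nat.lt_or_ge i p with hip | hip
  · rw [natWalkAppend_of_le h hip.le, natWalkAppend_of_le h hip]
    exact hg i hip
  · obtain ⟨k, rfl⟩ := Nat.exists_eq_add_of_le hip
    rw [natWalkAppend_add, Nat.add_assoc, natWalkAppend_add]
    exact hφ k (by omega)

theorem natWalkWeight_append (h : g p = φ 0) :
    natWalkWeight w (natWalkAppend g p φ) (p + L) =
      natWalkWeight w g p + natWalkWeight w φ L := by
  rw [natWalkWeight_add]
  congr 1
  · refine sum_congr rfl fun i hi => ?_
    have hi : i < p := mem_range.1 hi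
    rw [natWalkAppend_of_le h hi.le, natWalkAppend_of_le h hi]
  · simp only [natWalkWeight, natWalkAppend_add]

theorem cutOut_zero (h : f (i + d) = f i) : cutOut f i d 0 = f 0 :=
  natWalkAppend_of_le (by simpa using h.symm) (Nat.zero_le _)

theorem cutOut_add : cutOut f i d (i + r) = f (i + d + r) :=
  natWalkAppend_add

theorem IsNatWalk.cutOut (hf : IsNatWalk E f (i + d + r)) (h : f (i + d) = f i) :
    IsNatWalk E (cutOut f i d) (i + r) :=
  (hf.mono (by omega)).append hf.shift (by simpa using h.symm)

theorem natWalkWeight_cutOut (h : f (i + d) = f i) :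
    natWalkWeight w f (i + d + r) =
      natWalkWeight w (cutOut f i d) (i + r) + natWalkWeight w (fun k => f (i + k)) d := by
  rw [cutOut, natWalkWeight_append (by simpa using h.symm), natWalkWeight_add,
    natWalkWeight_add (a := i)]
  simp only [Nat.add_assoc]
  omega

theorem IsNatWalk.isReachableCycle_shift {x : Fin n} (hf : IsNatWalk E f (i + d + r))
    (hd : 0 < d) (h : f (i + d) = f i) (hx : ReflTransGen E x (f 0)) :
    IsReachableCycle E x (fun k => f (i + k)) d where
  pos := hd
  walk := (hf.mono (by omega)).shift
  closed := by simpa using h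
  reachable := by simpa using hx.trans (hf.reflTransGen (a := i) (by omega))

end Walks

theorem exists_apply_add_eq_of_not_injOn {α : Type*} {f : ℕ → α} {c : ℕ}
    (h : ¬ Set.InjOn f (range c)) : ∃ i d, 0 < d ∧ i + d < c ∧ f (i + d) = f i := by
  simp only [Set.InjOn, coe_range, Set.mem_Iio, not_forall] at h
  obtain ⟨a, ha, b, hb, hab, hne⟩ := h
  rcases Nat.lt_or_gt_of_ne hne with hlt | hlt
  · exact ⟨a, b - a, by omega, by omega, by rw [Nat.add_sub_cancel' hlt.le, hab]⟩
  · exact ⟨b, a - b, by omega, by omega, by rw [Nat.add_sub_cancel' hlt.le, hab]⟩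

theorem add_card_le_of_injOn {g : ℕ → Fin n} {p : ℕ} {C : Finset (Fin n)}
    (hg : Set.InjOn g (range p)) (hC : ∀ k < p, g k ∉ C) : p + C.card ≤ n := by
  classical
  have hdisj : Disjoint ((range p).image g) C := by
    rw [disjoint_left]
    rintro _ hy hyC
    obtain ⟨k, hk, rfl⟩ := mem_image.1 hy
    exact hC k (mem_range.1 hk) hyC
  calc p + C.card = ((range p).image g ∪ C).card := by
        rw [card_union_of_disjoint hdisj, card_image_of_injOn hg, card_range]
    _ ≤ n := (card_le_univ _).trans_eq (Fintype.card_fin n)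

theorem exists_apply_add_eq (f : ℕ → Fin n) :
    ∃ i d, 0 < d ∧ i + d ≤ n ∧ f (i + d) = f i := by
  have : ¬ Set.InjOn f (range (n + 1)) := fun hf => by
    simpa using add_card_le_of_injOn (C := ∅) hf fun _ _ => notMem_empty _
  obtain ⟨i, d, hd, hid, h⟩ := exists_apply_add_eq_of_not_injOn this
  exact ⟨i, d, hd, by omega, h⟩

section FinWalks

theorem exists_eq_comp_val {α : Type*} {t : ℕ} (p : Fin (t + 1) → α) :
    ∃ f : ℕ → α, p = fun i : Fin (t + 1) => f i :=
  ⟨fun m => p (Fin.clamp m t), funext fun i : Fin (t + 1) => by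
    simp [Fin.clamp, Nat.min_eq_left (Nat.lt_succ_iff.1 i.2)]⟩

variable {f : ℕ → Fin n} {t : ℕ}

theorem isWalk_comp_val : IsWalk E (fun i : Fin (t + 1) => f i) ↔ IsNatWalk E f t := by
  simp [IsWalk, IsNatWalk, Fin.forall_iff]

theorem walkWeight_comp_val :
    walkWeight w (fun i : Fin (t + 1) => f i) = natWalkWeight w f t := by
  simpa [walkWeight, natWalkWeight] using Fin.sum_univ_eq_sum_range (fun i => w (f i) (f (i + 1))) t

theorem reflTransGen_iff_exists_natWalk {x y : Fin n} :
    ReflTransGen E x y ↔ ∃ s f, IsNatWalk E f s ∧ f 0 = x ∧ f s = y := by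
  constructor
  · intro h
    induction h with
    | refl => exact ⟨0, fun _ => x, fun i hi => absurd hi (Nat.not_lt_zero i), rfl, rfl⟩
    | @tail b c _ hbc ih =>
      obtain ⟨s, f, hf, hf0, hfs⟩ := ih
      let step : ℕ → Fin n := fun k => if k = 0 then b else c
      have hstep : IsNatWalk E step 1 := fun i hi => by simpa [step, Nat.lt_one_iff.1 hi] using hbc
      refine ⟨s + 1, natWalkAppend f s step, hf.append hstep hfs, ?_, natWalkAppend_add⟩
      rw [natWalkAppend_of_le hfs (Nat.zero_le _), hf0]
  · rintro ⟨s, f, hf, rfl, rfl⟩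
    exact hf.reflTransGen le_rfl

theorem reachable_iff_reflTransGen {x y : Fin n} : Reachable E x y ↔ ReflTransGen E x y := by
  rw [reflTransGen_iff_exists_natWalk]
  constructor
  · rintro ⟨t, p, hp, h0, ht⟩
    obtain ⟨f, rfl⟩ := exists_eq_comp_val p
    exact ⟨t, f, isWalk_comp_val.1 hp, by simpa using h0, by simpa using ht⟩
  · rintro ⟨t, f, hf, h0, ht⟩
    exact ⟨t, fun i => f i, isWalk_comp_val.2 hf, by simpa using h0, by simpa using ht⟩

theorem mem_cycleMeans_iff {x : Fin n} {q : ℝ} :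
    q ∈ cycleMeans E w x ↔
      ∃ f c, IsReachableCycle E x f c ∧ q = (natWalkWeight w f c : ℝ) / c := by
  constructor
  · rintro ⟨c, p, hc, hp, hclosed, hx, rfl⟩
    obtain ⟨f, rfl⟩ := exists_eq_comp_val p
    refine ⟨f, c, ⟨hc, isWalk_comp_val.1 hp, by simpa using hclosed, ?_⟩, by
      rw [walkWeight_comp_val]⟩
    simpa using reachable_iff_reflTransGen.1 hx
  · rintro ⟨f, c, ⟨hc, hf, hclosed, hx⟩, rfl⟩
    exact ⟨c, fun i => f i, hc, isWalk_comp_val.2 hf, by simpa using hclosed,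
      by simpa using reachable_iff_reflTransGen.2 hx, by rw [walkWeight_comp_val]⟩

theorem deltaNat_eq_sInf {x : Fin n} :
    deltaNat E w t x =
      sInf {v | ∃ f, IsNatWalk E f t ∧ f 0 = x ∧ v = natWalkWeight w f t} := by
  rw [deltaNat]
  congr 1
  ext v
  constructor
  · rintro ⟨p, hp, h0, rfl⟩
    obtain ⟨f, rfl⟩ := exists_eq_comp_val p
    exact ⟨f, isWalk_comp_val.1 hp, by simpa using h0, walkWeight_comp_val⟩
  · rintro ⟨f, hf, h0, rfl⟩
    exact ⟨fun i => f i, isWalk_comp_val.2 hf, by simpa using h0, walkWeight_comp_val.symm⟩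

end FinWalks

namespace IsReachableCycle

variable {x : Fin n} {f : ℕ → Fin n} {c : ℕ}

theorem split (h : IsReachableCycle E x f c) (hf : ¬ Set.InjOn f (range c)) :
    ∃ g₁ c₁ g₂ c₂, IsReachableCycle E x g₁ c₁ ∧ IsReachableCycle E x g₂ c₂ ∧
      c₁ + c₂ = c ∧
      ∀ w : Fin n → Fin n → ℕ,
        natWalkWeight w g₁ c₁ + natWalkWeight w g₂ c₂ = natWalkWeight w f c := by
  obtain ⟨i, d, hd, hidc, heq⟩ := exists_apply_add_eq_of_not_injOn hf
  obtain ⟨r, rfl⟩ : ∃ r, c = i + d + r := ⟨c - (i + d), by omega⟩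
  refine ⟨cutOut f i d, i + r, fun k => f (i + k), d, ⟨by omega, h.walk.cutOut heq, ?_, ?_⟩,
    h.walk.isReachableCycle_shift hd heq h.reachable, by omega,
    fun w => (natWalkWeight_cutOut heq).symm⟩
  · rw [cutOut_add, cutOut_zero heq, h.closed]
  · simpa [cutOut_zero heq] using h.reachable

theorem exists_injOn (h : IsReachableCycle E x f c) :
    ∃ g d, IsReachableCycle E x g d ∧ Set.InjOn g (range d) := by
  induction c using Nat.strong_induction_on generalizing f with
  | _ c ih =>
    by_cases hf : Set.InjOn f (range c)
    · exact ⟨f, c, h, hf⟩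
    · obtain ⟨g, c₁, _, c₂, hg, h₂, hc, -⟩ := h.split hf
      exact ih c₁ (by have := h₂.pos; omega) hg

theorem mul_le_natWalkWeight_of_injOn {m : ℝ}
    (hm : ∀ g d, IsReachableCycle E x g d → Set.InjOn g (range d) →
      m * d ≤ natWalkWeight w g d)
    (h : IsReachableCycle E x f c) : m * c ≤ natWalkWeight w f c := by
  induction c using Nat.strong_induction_on generalizing f with
  | _ c ih =>
    by_cases hf : Set.InjOn f (range c)
    · exact hm f c h hf
    · obtain ⟨g₁, c₁, g₂, c₂, h₁, h₂, rfl, hwt⟩ := h.split hf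
      have hle₁ := ih c₁ (by have := h₂.pos; omega) h₁
      have hle₂ := ih c₂ (by have := h₁.pos; omega) h₂
      rw [← hwt w]
      push_cast
      linarith

end IsReachableCycle

theorem exists_injOn_cycle_min_mean {W : ℕ} (hW : ∀ u v, E u v → w u v ≤ W) {x : Fin n}
    {f : ℕ → Fin n} {c : ℕ} (h : IsReachableCycle E x f c) :
    ∃ g d, IsReachableCycle E x g d ∧ Set.InjOn g (range d) ∧
      ∀ g' d', IsReachableCycle E x g' d' → Set.InjOn g' (range d') →
        (natWalkWeight w g d : ℝ) / d * d' ≤ natWalkWeight w g' d' := by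
  set S : Set (ℕ × ℕ) := {q | ∃ g, IsReachableCycle E x g q.1 ∧ Set.InjOn g (range q.1) ∧
    q.2 = natWalkWeight w g q.1}
  have hfin : S.Finite := by
    refine (Set.finite_Icc ((0, 0) : ℕ × ℕ) (n, n * W)).subset ?_
    rintro ⟨d, v⟩ ⟨g, hg, hinj, hv⟩
    dsimp only at hg hinj hv
    subst hv
    have hd : d ≤ n := by
      simpa using add_card_le_of_injOn (C := ∅) hinj fun _ _ => notMem_empty _
    exact ⟨⟨Nat.zero_le _, Nat.zero_le _⟩, hd,
      (natWalkWeight_le hW hg.walk).trans (Nat.mul_le_mul_right W hd)⟩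
  obtain ⟨g₀, d₀, h₀, hinj₀⟩ := h.exists_injOn
  obtain ⟨⟨d, v⟩, ⟨g, hg, hinj, hv⟩, hmin⟩ :=
    S.exists_min_image (fun q => (q.2 : ℝ) / q.1) hfin
      ⟨(d₀, natWalkWeight w g₀ d₀), g₀, h₀, hinj₀, rfl⟩
  dsimp only at hg hinj hv
  subst hv
  refine ⟨g, d, hg, hinj, fun g' d' hg' hinj' => ?_⟩
  rw [← le_div_iff₀ (Nat.cast_pos.2 hg'.pos)]
  exact hmin (d', _) ⟨g', hg', hinj', rfl⟩

section MinimumCycleMean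

variable {x : Fin n} {f : ℕ → Fin n} {c t : ℕ}

theorem mcm_nonneg : 0 ≤ mcm E w x :=
  Real.sInf_nonneg fun q hq => by
    obtain ⟨f, c, -, rfl⟩ := mem_cycleMeans_iff.1 hq
    positivity

theorem IsReachableCycle.mcm_mul_le (h : IsReachableCycle E x f c) :
    mcm E w x * c ≤ natWalkWeight w f c := by
  have hmem : (natWalkWeight w f c : ℝ) / c ∈ cycleMeans E w x :=
    mem_cycleMeans_iff.2 ⟨f, c, h, rfl⟩
  rw [← le_div_iff₀ (Nat.cast_pos.2 h.pos)]
  exact csInf_le ⟨0, fun q hq => by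
    obtain ⟨f, c, -, rfl⟩ := mem_cycleMeans_iff.1 hq
    positivity⟩ hmem

theorem exists_injOn_cycle_mcm_mul_eq {W : ℕ} (hW : ∀ u v, E u v → w u v ≤ W)
    (hcyc : (cycleMeans E w x).Nonempty) :
    ∃ f c, IsReachableCycle E x f c ∧ Set.InjOn f (range c) ∧
      mcm E w x * c = natWalkWeight w f c := by
  obtain ⟨f₀, c₀, h₀, -⟩ := mem_cycleMeans_iff.1 hcyc.some_mem
  obtain ⟨f, c, h, hinj, hmin⟩ := exists_injOn_cycle_min_mean hW h₀
  refine ⟨f, c, h, hinj, h.mcm_mul_le.antisymm ?_⟩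
  rw [← div_le_iff₀ (Nat.cast_pos.2 h.pos)]
  refine le_csInf hcyc fun q hq => ?_
  obtain ⟨g, d, hg, rfl⟩ := mem_cycleMeans_iff.1 hq
  rw [le_div_iff₀ (Nat.cast_pos.2 hg.pos)]
  exact hg.mul_le_natWalkWeight_of_injOn hmin

end MinimumCycleMean

section Delta

variable {x : Fin n} {f : ℕ → Fin n} {t : ℕ}

theorem exists_natWalk_forall (hout : ∀ v, ∃ u, E v u) (x : Fin n) :
    ∃ f : ℕ → Fin n, f 0 = x ∧ ∀ t, IsNatWalk E f t := by
  choose next hnext using hout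
  exact ⟨fun k => next^[k] x, rfl, fun t i _ => by
    simpa only [Function.iterate_succ_apply'] using hnext _⟩

theorem deltaNat_le (hf : IsNatWalk E f t) (hx : f 0 = x) :
    deltaNat E w t x ≤ natWalkWeight w f t := by
  rw [deltaNat_eq_sInf]
  exact Nat.sInf_le ⟨f, hf, hx, rfl⟩

theorem exists_natWalk_deltaNat_eq (hout : ∀ v, ∃ u, E v u) (x : Fin n) (t : ℕ) :
    ∃ f, IsNatWalk E f t ∧ f 0 = x ∧ deltaNat E w t x = natWalkWeight w f t := by
  obtain ⟨f, hf0, hf⟩ := exists_natWalk_forall hout x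
  rw [deltaNat_eq_sInf]
  have hne : {v | ∃ f, IsNatWalk E f t ∧ f 0 = x ∧ v = natWalkWeight w f t}.Nonempty :=
    ⟨_, f, hf t, hf0, rfl⟩
  exact Nat.sInf_mem hne

/-- A walk from a vertex reachable from `x` is a simple path of length `< n` plus cycles, each
of mean at least `m`. -/
theorem IsNatWalk.mul_sub_le_natWalkWeight {m : ℝ} (hm0 : 0 ≤ m)
    (hm : ∀ g d, IsReachableCycle E x g d → m * d ≤ natWalkWeight w g d)
    (hf : IsNatWalk E f t) (hx : ReflTransGen E x (f 0)) :
    m * t - m * n ≤ natWalkWeight w f t := by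
  induction t using Nat.strong_induction_on generalizing f with
  | _ t ih =>
    by_cases htn : t ≤ n
    · have : m * t ≤ m * n := mul_le_mul_of_nonneg_left (by exact_mod_cast htn) hm0
      have : (0 : ℝ) ≤ natWalkWeight w f t := Nat.cast_nonneg _
      linarith
    obtain ⟨i, d, hd, hidn, heq⟩ := exists_apply_add_eq f
    obtain ⟨r, rfl⟩ : ∃ r, t = i + d + r := ⟨t - (i + d), by omega⟩
    have hcycle := hm _ _ (hf.isReachableCycle_shift hd heq hx)
    have hrest := ih (i + r) (by omega) (hf.cutOut heq) (by rwa [cutOut_zero heq])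
    rw [natWalkWeight_cutOut heq]
    push_cast at hcycle hrest ⊢
    linarith

theorem mcm_mul_sub_le_deltaNat (hout : ∀ v, ∃ u, E v u) (x : Fin n) (t : ℕ) :
    mcm E w x * t - mcm E w x * n ≤ deltaNat E w t x := by
  obtain ⟨f, hf, hf0, hδ⟩ := exists_natWalk_deltaNat_eq (w := w) hout x t
  rw [hδ]
  exact hf.mul_sub_le_natWalkWeight mcm_nonneg (fun _ _ h => h.mcm_mul_le) (hf0 ▸ .refl)

end Delta

section Periodic

theorem sum_range_add_of_periodic {M : Type*} [AddCommMonoid M] {φ : ℕ → M} {c : ℕ}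
    (hφ : Periodic φ c) (s : ℕ) : ∑ k ∈ range c, φ (s + k) = ∑ k ∈ range c, φ k := by
  have h := sum_Ico_eq_sum_range φ s (s + c)
  rw [Nat.add_sub_cancel_left] at h
  rw [← h, sum_eq_multiset_sum, sum_eq_multiset_sum, range_val, ← Nat.multiset_Ico_map_mod s c,
    Multiset.map_map]
  exact congr_arg Multiset.sum (Multiset.map_congr rfl fun k _ => (hφ.map_mod_nat k).symm)

theorem sum_range_mul_of_periodic {M : Type*} [AddCommMonoid M] {φ : ℕ → M} {c : ℕ}
    (hφ : Periodic φ c) (q : ℕ) :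
    ∑ k ∈ range (q * c), φ k = q • ∑ k ∈ range c, φ k := by
  induction q with
  | zero => simp
  | succ q ih =>
    rw [Nat.succ_mul, sum_range_add, ih, succ_nsmul]
    congr 1
    exact sum_congr rfl fun k _ => by simpa [add_comm] using hφ.nat_mul q k

theorem mul_sum_range_le_of_periodic {φ : ℕ → ℕ} {c : ℕ} (hφ : Periodic φ c) (hc : 0 < c)
    (L : ℕ) : c * ∑ k ∈ range L, φ k ≤ (L + c) * ∑ k ∈ range c, φ k := by
  have hL : L ≤ (L / c + 1) * c := by
    have := Nat.lt_div_mul_add (a := L) hc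
    rw [add_mul, one_mul]
    omega
  have hq : c * (L / c + 1) ≤ L + c := by
    have := Nat.div_mul_le_self L c
    rw [mul_add, mul_one, mul_comm]
    omega
  calc c * ∑ k ∈ range L, φ k ≤ c * ∑ k ∈ range ((L / c + 1) * c), φ k :=
        Nat.mul_le_mul_left _ (sum_le_sum_of_subset (range_subset_range.2 hL))
    _ = c * (L / c + 1) * ∑ k ∈ range c, φ k := by
        rw [sum_range_mul_of_periodic hφ, smul_eq_mul, mul_assoc]
    _ ≤ (L + c) * ∑ k ∈ range c, φ k := Nat.mul_le_mul_right _ hq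

variable {f : ℕ → Fin n} {c : ℕ}

theorem apply_add_one_mod (hc : 0 < c) (hfc : f c = f 0) (k : ℕ) :
    f ((k + 1) % c) = f (k % c + 1) := by
  have hk := Nat.div_add_mod k c
  have hlt := Nat.mod_lt k hc
  generalize k / c = q at hk
  rcases Nat.lt_or_ge (k % c + 1) c with h | h
  · rw [show k + 1 = k % c + 1 + c * q by omega, Nat.add_mul_mod_self_left, Nat.mod_eq_of_lt h]
  · rw [show k + 1 = c * (q + 1) by rw [Nat.mul_add]; omega, Nat.mul_mod_right,
      show k % c + 1 = c by omega, hfc]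

theorem IsNatWalk.comp_mod (hf : IsNatWalk E f c) (hc : 0 < c) (hfc : f c = f 0) (t : ℕ) :
    IsNatWalk E (fun k => f (k % c)) t := fun k _ => by
  simpa only [apply_add_one_mod hc hfc] using hf _ (Nat.mod_lt k hc)

theorem natWalkWeight_comp_mod (hc : 0 < c) (hfc : f c = f 0) :
    natWalkWeight w (fun k => f (k % c)) c = natWalkWeight w f c :=
  sum_congr rfl fun k hk => by
    show w (f (k % c)) (f ((k + 1) % c)) = _
    rw [apply_add_one_mod hc hfc, Nat.mod_eq_of_lt (mem_range.1 hk)]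

end Periodic

/-- A shortest walk from `x` into `C` visits distinct vertices, none in `C` before its end. -/
theorem exists_natWalk_to_finset {x y : Fin n} {C : Finset (Fin n)} (hy : y ∈ C)
    (hxy : ReflTransGen E x y) :
    ∃ p g, IsNatWalk E g p ∧ g 0 = x ∧ g p ∈ C ∧ p + C.card ≤ n := by
  classical
  have hP : ∃ p g, IsNatWalk E g p ∧ g 0 = x ∧ g p ∈ C := by
    obtain ⟨s, g, hg, hg0, rfl⟩ := reflTransGen_iff_exists_natWalk.1 hxy
    exact ⟨s, g, hg, hg0, hy⟩
  obtain ⟨g, hg, hg0, hgC⟩ := Nat.find_spec hP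
  refine ⟨_, g, hg, hg0, hgC, add_card_le_of_injOn ?_ fun k hk hkC =>
    Nat.find_min hP hk ⟨g, hg.mono hk.le, hg0, hkC⟩⟩
  by_contra hinj
  obtain ⟨i, d, hd, hidp, heq⟩ := exists_apply_add_eq_of_not_injOn hinj
  obtain ⟨r, hr⟩ : ∃ r, Nat.find hP = i + d + r := ⟨_, (Nat.add_sub_cancel' hidp.le).symm⟩
  rw [hr] at hg hgC
  exact Nat.find_min hP (show i + r < Nat.find hP by omega)
    ⟨cutOut g i d, hg.cutOut heq, by rw [cutOut_zero heq, hg0], by rwa [cutOut_add]⟩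

/-- Walk to the cycle along a shortest path, then go round the cycle. -/
theorem IsReachableCycle.mul_deltaNat_le {W : ℕ} (hW : ∀ u v, E u v → w u v ≤ W) {x : Fin n}
    {f : ℕ → Fin n} {c : ℕ} (h : IsReachableCycle E x f c) (hinj : Set.InjOn f (range c))
    (t : ℕ) : c * deltaNat E w t x ≤ t * natWalkWeight w f c + c * (n * W) := by
  classical
  obtain ⟨p, g, hg, hg0, hgC, hpc⟩ :=
    exists_natWalk_to_finset (mem_image_of_mem f (mem_range.2 h.pos)) h.reachable
  rw [card_image_of_injOn hinj, card_range] at hpc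
  obtain ⟨s, hs, hfs⟩ := mem_image.1 hgC
  set Φ : ℕ → Fin n := fun k => f ((s + k) % c)
  have hΦ : ∀ L, IsNatWalk E Φ L := fun L => (h.walk.comp_mod h.pos h.closed (s + L)).shift
  have hgΦ : g p = Φ 0 := by simp [Φ, Nat.mod_eq_of_lt (mem_range.1 hs), hfs]
  have hδ : deltaNat E w t x ≤ natWalkWeight w g p + natWalkWeight w Φ t :=
    calc deltaNat E w t x ≤ natWalkWeight w (natWalkAppend g p Φ) t :=
          deltaNat_le ((hg.append (hΦ t) hgΦ).mono (by omega))
            (by rw [natWalkAppend_of_le hgΦ (Nat.zero_le _), hg0])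
      _ ≤ natWalkWeight w (natWalkAppend g p Φ) (p + t) := natWalkWeight_mono (by omega)
      _ = _ := natWalkWeight_append hgΦ
  have hΦt : c * natWalkWeight w Φ t ≤ (t + c) * natWalkWeight w f c := by
    set ψ : ℕ → ℕ := fun k => w (f (k % c)) (f ((k + 1) % c))
    have hψ : Periodic ψ c := fun k => by
      simp only [ψ, Nat.add_right_comm k c, Nat.add_mod_right]
    calc c * natWalkWeight w Φ t = c * ∑ k ∈ range t, ψ (s + k) := rfl
      _ ≤ (t + c) * ∑ k ∈ range c, ψ (s + k) :=
        mul_sum_range_le_of_periodic (hψ.const_add s) h.pos t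
      _ = (t + c) * natWalkWeight w f c := by
        rw [sum_range_add_of_periodic hψ, ← natWalkWeight_comp_mod h.pos h.closed]
        rfl
  have hg_le := natWalkWeight_le hW hg
  have hf_le := Nat.mul_le_mul_left c (natWalkWeight_le hW h.walk)
  have hpcW := Nat.mul_le_mul_right (c * W) hpc
  calc c * deltaNat E w t x ≤ c * (p * W) + (t + c) * natWalkWeight w f c := by nlinarith
    _ ≤ t * natWalkWeight w f c + c * (n * W) := by nlinarith

theorem mcm_approx_of_deltaNat_bounds {μ δ δ' ε n W t : ℝ} (hε0 : 0 < ε) (hε1 : ε ≤ 1 / 2)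
    (hn : 0 < n) (hμ : 1 / n ≤ μ) (hμW : μ ≤ W) (ht : n ^ 2 * W / ε ≤ t)
    (hlow : μ * t - μ * n ≤ δ) (hup : δ ≤ μ * t + n * W) (h1 : δ ≤ δ') (h2 : δ' ≤ (1 + ε) * δ) :
    μ ≤ δ' / ((1 - ε) * t) ∧ δ' / ((1 - ε) * t) ≤ (1 + 7 * ε) * μ := by
  have hnμ : 1 ≤ n * μ := by rwa [div_le_iff₀' hn] at hμ
  have hμ0 : 0 < μ := by nlinarith
  have hεt : n ^ 2 * W ≤ ε * t := by
    rw [div_le_iff₀ hε0] at ht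
    linarith
  have hnW : n * W ≤ ε * (μ * t) := by
    nlinarith [mul_le_mul_of_nonneg_left hnμ (mul_nonneg hn.le (hμ0.le.trans hμW))]
  have ht0 : 0 < t := by nlinarith [mul_pos hε0 hμ0]
  have hd : 0 < (1 - ε) * t := mul_pos (by linarith) ht0
  have hμt : 0 ≤ μ * t := by positivity
  constructor
  · rw [le_div_iff₀ hd]
    nlinarith [mul_le_mul_of_nonneg_left hμW hn.le]
  · rw [div_le_iff₀ hd]
    have hδ : δ ≤ (1 + ε) * (μ * t) := by linarith
    nlinarith [mul_le_mul_of_nonneg_left hδ (by linarith : (0 : ℝ) ≤ 1 + ε),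
      mul_nonneg (mul_nonneg hε0.le (by linarith : 0 ≤ 1 - 2 * ε)) hμt]

end

/-- Let `0 < ε ≤ 1/2`, let `x` be a vertex with `μ(x) ≥ 1/n`, let `t` be
an integer with `t ≥ n²·W/ε`, and suppose `δ̂_t(x)` is a real number with
`δ_t(x) ≤ δ̂_t(x) ≤ (1+ε)·δ_t(x)`. Then `μ̂(x) := δ̂_t(x)/((1−ε)·t)` satisfies
`μ(x) ≤ μ̂(x) ≤ (1 + 7ε)·μ(x)`. -/
theorem approx_mcm_from_approx_delta {n : ℕ} (E : Fin n → Fin n → Prop)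
    (w : Fin n → Fin n → ℕ) (hout : ∀ v : Fin n, ∃ u : Fin n, E v u)
    (W : ℕ) (hW : ∀ a b : Fin n, E a b → w a b ≤ W)
    (x : Fin n) (hcyc : (cycleMeans E w x).Nonempty)
    (ε : ℝ) (hε0 : 0 < ε) (hε1 : ε ≤ 1 / 2)
    (hmu : 1 / (n : ℝ) ≤ mcm E w x)
    (t : ℕ) (ht : (n : ℝ) ^ 2 * (W : ℝ) / ε ≤ (t : ℝ))
    (deltaHat : ℝ) (h1 : (deltaNat E w t x : ℝ) ≤ deltaHat)
    (h2 : deltaHat ≤ (1 + ε) * (deltaNat E w t x : ℝ)) :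
    mcm E w x ≤ deltaHat / ((1 - ε) * (t : ℝ)) ∧
    deltaHat / ((1 - ε) * (t : ℝ)) ≤ (1 + 7 * ε) * mcm E w x := by
  obtain ⟨f, c, hfc, hinj, hμ⟩ := exists_injOn_cycle_mcm_mul_eq hW hcyc
  have hc : (0 : ℝ) < c := Nat.cast_pos.2 hfc.pos
  have hμW : mcm E w x ≤ W := by
    have : (natWalkWeight w f c : ℝ) ≤ c * W := by exact_mod_cast natWalkWeight_le hW hfc.walk
    nlinarith
  have hup : (deltaNat E w t x : ℝ) ≤ mcm E w x * t + n * W := by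
    have key : (c * deltaNat E w t x : ℝ) ≤ t * natWalkWeight w f c + c * (n * W) := by
      exact_mod_cast hfc.mul_deltaNat_le hW hinj t
    rw [← hμ] at key
    rw [← mul_le_mul_iff_right₀ hc]
    linarith
  exact mcm_approx_of_deltaNat_bounds hε0 hε1 (Nat.cast_pos.2 x.pos) hmu hμW ht
    (mcm_mul_sub_le_deltaNat hout x t) hup h1 h2
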